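/- arXiv:1505.07308 — 3 statements merged into one kernel-verified Lean document; each statement's English description precedes it below -/
import Mathlib

section
/- Let Q be a finite (left) quasifield with q elements, let A ⊆ Q\{0} be nonempty, and let c be a real number with 0 < c and c + c^{1/2} < 1. Then |A+A|·|A·A| ≥ min{ c·q·|A| , c·|A|⁴/q }. -/
/-- A finite (left) quasifield. -/
class Quasifield (Q : Type*) extends AddCommGroup Q, Mul Q, One Q where
  one_ne_zero : (1 : Q) ≠ 0
  one_mul : ∀ a : Q, 1 * a = a
  mul_one : ∀ a : Q, a * 1 = a
  zero_mul : ∀ a : Q, 0 * a = 0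
  mul_zero : ∀ a : Q, a * 0 = 0
  mul_ne_zero : ∀ a b : Q, a ≠ 0 → b ≠ 0 → a * b ≠ 0
  existsUnique_mul_left : ∀ a b : Q, a ≠ 0 → b ≠ 0 → ∃! x : Q, a * x = b
  existsUnique_mul_right : ∀ a b : Q, a ≠ 0 → b ≠ 0 → ∃! y : Q, y * a = b
  left_distrib : ∀ a b c : Q, a * (b + c) = a * b + a * c
  existsUnique_affine : ∀ a b c : Q, a ≠ b → ∃! x : Q, a * x = b * x + c

/-- The kernel of a quasifield. -/
def Quasifield.kernel (Q : Type*) [Quasifield Q] : Set Q :=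
  {k | (∀ x y : Q, (x + y) * k = x * k + y * k) ∧ ∀ x y : Q, (x * y) * k = x * (y * k)}

open scoped Pointwise

/-!
The lines `y = a * (x - b)`, `(a, b) ∈ A × A`, are graphs of functions `Q → Q`; for `a ≠ 0`
two of them meet at most once, by left distributivity and the unique solvability of
`a * x = a' * x + c`. Each passes through the `|A|` points `(x + b, a * x)`, `x ∈ A`, of
`(A + A) × (A * A)`, so there are at least `|A|³` incidences. For graphs pairwise meeting at most
once, Cauchy–Schwarz against the second moment of the number of graphs through a point gives the
Vinh-type bound `(I - |T| |W| / q)² ≤ |T| |W| q`, and comparing the two yields the claim.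
-/

open Finset

namespace Quasifield

variable {Q : Type*} [Quasifield Q]

def mulLeft (a : Q) : Q →+ Q := AddMonoidHom.mk' (a * ·) (left_distrib a)

lemma mul_sub (a b c : Q) : a * (b - c) = a * b - a * c := map_sub (mulLeft a) b c

lemma eq_of_mul_eq_mul_left {a b c : Q} (ha : a ≠ 0) (h : a * b = a * c) : b = c := by
  by_contra hbc
  apply Quasifield.mul_ne_zero a (b - c) ha (sub_ne_zero.2 hbc)
  rw [Quasifield.mul_sub, h, sub_self]

lemma setOf_mul_sub_eq_subsingleton {w w' : Q × Q} (hw : w.1 ≠ 0) (hne : w ≠ w') :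
    {x : Q | w.1 * (x - w.2) = w'.1 * (x - w'.2)}.Subsingleton := by
  obtain ⟨a, b⟩ := w
  obtain ⟨a', b'⟩ := w'
  rcases eq_or_ne a a' with rfl | haa
  · intro x (hx : a * (x - b) = a * (x - b'))
    exact (hne (by rw [sub_right_inj.1 (eq_of_mul_eq_mul_left hw hx)])).elim
  · have hx_affine :
        ∀ x : Q, a * (x - b) = a' * (x - b') → a * x = a' * x + (a * b - a' * b') := by
      intro x hx
      rw [Quasifield.mul_sub, Quasifield.mul_sub, sub_eq_sub_iff_sub_eq_sub] at hx
      exact sub_eq_iff_eq_add'.1 hx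
    obtain ⟨_, -, huniq⟩ := existsUnique_affine a a' (a * b - a' * b') haa
    intro x hx y hy
    exact (huniq x (hx_affine x hx)).trans (huniq y (hx_affine y hy)).symm

end Quasifield

section GraphIncidence

variable {ι β : Type*} [Fintype β] [DecidableEq β] (f : ι → β → β) (W : Finset ι)

def graphDegree (z : β × β) : ℕ := #{w ∈ W | z.2 = f w z.1}

def graphIncidences (T : Finset (β × β)) : ℕ := ∑ w ∈ W, #{x | (x, f w x) ∈ T}

lemma sum_graphDegree_mul (g : β × β → ℕ) :
    ∑ z, graphDegree f W z * g z = ∑ w ∈ W, ∑ x, g (x, f w x) := by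
  simp only [graphDegree, card_filter, sum_mul, boole_mul]
  rw [sum_comm]
  refine sum_congr rfl fun w _ => ?_
  simp [Fintype.sum_prod_type, sum_ite_eq']

lemma sum_graphDegree_eq_graphIncidences (T : Finset (β × β)) :
    ∑ z ∈ T, graphDegree f W z = graphIncidences f W T := by
  have := sum_graphDegree_mul f W (fun z => if z ∈ T then 1 else 0)
  simp only [mul_boole, ← sum_filter, Finset.filter_mem_eq_inter, univ_inter] at this
  simp only [this, graphIncidences, card_eq_sum_ones]

lemma sum_graphDegree : ∑ z, graphDegree f W z = #W * Fintype.card β := by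
  simpa [graphIncidences] using sum_graphDegree_eq_graphIncidences f W univ

lemma sum_graphDegree_sq_le [DecidableEq ι]
    (hf : ∀ w ∈ W, ∀ w' ∈ W, w ≠ w' → {x | f w x = f w' x}.Subsingleton) :
    ∑ z, graphDegree f W z ^ 2 ≤ #W * Fintype.card β + #W ^ 2 := by
  have hcoincide : ∀ w ∈ W, ∑ w' ∈ W, #{x | f w x = f w' x} ≤ Fintype.card β + #W := by
    intro w hw
    rw [← add_sum_erase W _ hw]
    gcongr
    · simp
    · calc ∑ w' ∈ W.erase w, #{x | f w x = f w' x} ≤ ∑ _w' ∈ W.erase w, 1 :=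
            sum_le_sum fun w' hw' => card_le_one.2 fun x hx y hy =>
              hf w hw w' (mem_of_mem_erase hw') (ne_of_mem_erase hw').symm
                (mem_filter.1 hx).2 (mem_filter.1 hy).2
        _ ≤ #W := by simpa using card_erase_le
  calc ∑ z, graphDegree f W z ^ 2 = ∑ w ∈ W, ∑ w' ∈ W, #{x | f w x = f w' x} := by
        simp only [sq, sum_graphDegree_mul]
        simp only [graphDegree, card_filter]
        exact sum_congr rfl fun w _ => sum_comm
    _ ≤ ∑ _w ∈ W, (Fintype.card β + #W) := sum_le_sum hcoincide
    _ = #W * Fintype.card β + #W ^ 2 := by rw [sum_const, smul_eq_mul]; ring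

theorem sq_graphIncidences_sub_le [DecidableEq ι] [Nonempty β]
    (hf : ∀ w ∈ W, ∀ w' ∈ W, w ≠ w' → {x | f w x = f w' x}.Subsingleton)
    (T : Finset (β × β)) :
    ((graphIncidences f W T : ℝ) - #T * #W / Fintype.card β) ^ 2 ≤
      #T * #W * Fintype.card β := by
  obtain ⟨q, hq_def⟩ : ∃ q : ℝ, q = Fintype.card β := ⟨_, rfl⟩
  obtain ⟨r, hr_def⟩ : ∃ r : β × β → ℝ, r = fun z => (graphDegree f W z : ℝ) :=
    ⟨_, rfl⟩
  have hq : q ≠ 0 := by rw [hq_def]; positivity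
  have hsum : ∑ z, r z = #W * q := by
    simp only [hr_def, hq_def]; exact_mod_cast sum_graphDegree f W
  have hsum_sq : ∑ z, r z ^ 2 ≤ #W * q + #W ^ 2 := by
    simp only [hr_def, hq_def]; exact_mod_cast sum_graphDegree_sq_le f W hf
  have hvar : ∑ z, (r z - #W / q) ^ 2 ≤ #W * q :=
    calc ∑ z, (r z - #W / q) ^ 2
          = ∑ z, r z ^ 2 - 2 * (#W / q) * ∑ z, r z + q * q * (#W / q) ^ 2 := by
          simp only [sub_sq, sum_add_distrib, sum_sub_distrib, sum_const, card_univ,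
            Fintype.card_prod, nsmul_eq_mul, hq_def, mul_sum, Nat.cast_mul]
          congr 2
          exact sum_congr rfl fun z _ => by ring
      _ = ∑ z, r z ^ 2 - #W ^ 2 := by rw [hsum]; field_simp; ring
      _ ≤ #W * q := by linarith
  calc ((graphIncidences f W T : ℝ) - #T * #W / Fintype.card β) ^ 2
        = (∑ z ∈ T, (r z - #W / q)) ^ 2 := by
        rw [← sum_graphDegree_eq_graphIncidences, sum_sub_distrib, sum_const, nsmul_eq_mul,
          mul_div_assoc, hr_def, hq_def]
        push_cast
        rfl
    _ ≤ #T * ∑ z ∈ T, (r z - #W / q) ^ 2 := sq_sum_le_card_mul_sum_sq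
    _ ≤ #T * ∑ z, (r z - #W / q) ^ 2 := by
        gcongr ?_ * ?_
        exact sum_le_univ_sum_of_nonneg fun _ => sq_nonneg _
    _ ≤ #T * #W * Fintype.card β := by rw [mul_assoc, ← hq_def]; gcongr

end GraphIncidence

lemma Quasifield.card_pow_three_le_graphIncidences {Q : Type*} [Quasifield Q] [Fintype Q]
    [DecidableEq Q] (A : Finset Q) :
    #A ^ 3 ≤ graphIncidences (fun w x => w.1 * (x - w.2)) (A ×ˢ A) ((A + A) ×ˢ (A * A)) := by
  have hline : ∀ w ∈ A ×ˢ A, #A ≤ #{x | (x, w.1 * (x - w.2)) ∈ (A + A) ×ˢ (A * A)} := by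
    rintro ⟨a, b⟩ hw
    obtain ⟨ha, hb⟩ := mem_product.1 hw
    refine card_le_card_of_injOn (· + b) (fun x hx => ?_) (add_left_injective b).injOn
    simpa [mem_product] using ⟨add_mem_add hx hb, mul_mem_mul ha hx⟩
  calc #A ^ 3 = ∑ _w ∈ A ×ˢ A, #A := by rw [sum_const, card_product, smul_eq_mul]; ring
    _ ≤ _ := sum_le_sum hline

lemma min_le_of_sq_sub_le {c n q X I : ℝ} (hn₀ : 0 ≤ n) (hq : 0 < q) (hX : 0 ≤ X)
    (hc : c + √c < 1) (hI : n ^ 3 ≤ I) (hIX : (I - X * n ^ 2 / q) ^ 2 ≤ X * n ^ 2 * q) :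
    min (c * q * n) (c * n ^ 4 / q) ≤ X := by
  by_contra! hlt
  obtain ⟨hlt₁, hlt₂⟩ := lt_min_iff.1 hlt
  have hn : 0 < n := by
    rcases hn₀.eq_or_lt with rfl | hn
    · rw [mul_zero] at hlt₁; linarith
    · exact hn
  have hc0 : 0 < c := by
    by_contra! hc0; nlinarith [mul_nonpos_of_nonpos_of_nonneg hc0 (mul_nonneg hq.le hn.le)]
  have hsqrt := Real.sq_sqrt hc0.le
  -- `I - X n² / q` is squeezed between `(1 - c) n³` and `√c n³`, contradicting `c + √c < 1`.
  have hD_lower : (1 - c) * n ^ 3 < I - X * n ^ 2 / q := by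
    have : X * n ^ 2 / q < c * n ^ 3 := by
      rw [div_lt_iff₀ hq]; nlinarith [pow_pos hn 2]
    linarith
  have hD_upper : I - X * n ^ 2 / q < √c * n ^ 3 := by
    refine lt_of_pow_lt_pow_left₀ 2 (by positivity) (hIX.trans_lt ?_)
    rw [mul_pow, hsqrt]
    rw [lt_div_iff₀ hq] at hlt₂
    nlinarith [pow_pos hn 2]
  nlinarith [pow_pos hn 3]

theorem stmt_1_general {Q : Type*} [Quasifield Q] [Fintype Q] [DecidableEq Q]
    (A : Finset Q) (hA0 : ∀ a ∈ A, a ≠ 0)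
    (c : ℝ) (hc1 : c + Real.sqrt c < 1) :
    min (c * (Fintype.card Q) * A.card) (c * (A.card : ℝ) ^ 4 / (Fintype.card Q)) ≤
      ((A + A).card : ℝ) * ((A * A).card : ℝ) := by
  have hlines : ∀ w ∈ A ×ˢ A, ∀ w' ∈ A ×ˢ A, w ≠ w' →
      {x : Q | w.1 * (x - w.2) = w'.1 * (x - w'.2)}.Subsingleton := fun w hw _ _ hne =>
    Quasifield.setOf_mul_sub_eq_subsingleton (hA0 _ (mem_product.1 hw).1) hne
  have hvinh := sq_graphIncidences_sub_le _ _ hlines ((A + A) ×ˢ (A * A))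
  have hlower := Nat.cast_le (α := ℝ) |>.2 (Quasifield.card_pow_three_le_graphIncidences A)
  rw [Nat.cast_pow] at hlower
  refine min_le_of_sq_sub_le (by positivity) (by positivity) (by positivity) hc1 hlower ?_
  simpa only [card_product, Nat.cast_mul, sq] using hvinh

/-- Corollary 1.5 (generalized Garaev): for nonempty `A ⊆ Q \ {0}` and any real
`c > 0` with `c + √c < 1`, one has `|A+A|·|A·A| ≥ min (c q |A|) (c |A|⁴ / q)`. -/
theorem stmt_1 {Q : Type*} [Quasifield Q] [Fintype Q] [DecidableEq Q]
    (A : Finset Q) (hA : A.Nonempty) (hA0 : ∀ a ∈ A, a ≠ 0)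
    (c : ℝ) (hc : 0 < c) (hc1 : c + Real.sqrt c < 1) :
    min (c * (Fintype.card Q) * A.card) (c * (A.card : ℝ) ^ 4 / (Fintype.card Q)) ≤
      ((A + A).card : ℝ) * ((A * A).card : ℝ) :=
  stmt_1_general A hA0 c hc1
end

section
/- Let Q be a finite (left) quasifield with q elements and let A ⊆ Q\{0}. Setting z = |A·(A+A)|, where A·(A+A) = {a·(b+c) : a,b,c ∈ A}, one has q·|A|^{3/2} ≤ |A|^{3/2}·z + q^{3/2}·√z. (In particular |A·(A+A)| ≥ c·min{q, |A|³/q} for an absolute constant c > 0.) -/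
open scoped Pointwise

/-!
Count incidences in the affine plane over `Q` between the points `A × A·(A+A)` and the `|A|²`
lines `y = a·x + a·c` with `a, c ∈ A`: by left distributivity each triple `(a, b, c)` puts the
point `(b, a·(b+c))` on the line of `(a, c)`, so there are at least `|A|³` incidences. The
non-vertical lines form a design in which every point lies on `q` lines and two points on at
most one, so the numbers of points of `P` on the `q²` lines have variance at most `q|P|` about
their mean `|P|/q`; Cauchy–Schwarz then bounds the incidences by `|P||L|/q + √(q|P||L|)`.
With `|P| = |A|z` and `|L| = |A|²` the inequality is a rearrangement of this bound.
-/

open Finset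

namespace Quasifield

variable {Q : Type*} [Quasifield Q]

theorem mul_left_cancel₀ {a x y : Q} (ha : a ≠ 0) (h : a * x = a * y) : x = y := by
  by_cases hy : y = 0
  · subst hy
    by_contra hx
    exact mul_ne_zero a x ha hx (h.trans (Quasifield.mul_zero a))
  · exact (existsUnique_mul_left a (a * y) ha (mul_ne_zero a y ha hy)).unique h rfl

theorem eq_of_mul_sub_mul_eq {a b x₁ x₂ : Q} (hx : x₁ ≠ x₂)
    (h : a * x₁ - a * x₂ = b * x₁ - b * x₂) : a = b := by
  by_contra hab
  refine hx ((existsUnique_affine a b (a * x₂ - b * x₂) hab).unique ?_ ?_)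
  · rw [← sub_eq_sub_iff_sub_eq_sub.mp h]
    abel
  · abel

theorem injOn_fst_mul {A : Set Q} (hA : ∀ a ∈ A, a ≠ 0) :
    Set.InjOn (fun ac : Q × Q => (ac.1, ac.1 * ac.2)) (A ×ˢ A) := by
  rintro ⟨a, c⟩ ⟨ha, -⟩ ⟨a', c'⟩ - h
  obtain ⟨rfl, h⟩ := Prod.mk.inj h
  exact Prod.ext rfl (mul_left_cancel₀ (hA a ha) h)

/-- Lines of the affine plane over `Q` are encoded as pairs `l = (m, k)`, standing for
`y = m * x + k`; vertical lines are left out. -/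
def LiesOn (p l : Q × Q) : Prop := p.2 = l.1 * p.1 + l.2

instance [DecidableEq Q] (p l : Q × Q) : Decidable (LiesOn p l) :=
  inferInstanceAs (Decidable (_ = _))

variable [DecidableEq Q]

def lineCount (P : Finset (Q × Q)) (l : Q × Q) : ℕ := #{p ∈ P | LiesOn p l}

theorem card_le_lineCount {A Z : Finset Q} {a c : Q} (hZ : ∀ b ∈ A, a * (b + c) ∈ Z) :
    #A ≤ lineCount (A ×ˢ Z) (a, a * c) :=
  card_le_card_of_injOn (fun b => (b, a * (b + c)))
    (fun b hb => mem_filter.2 ⟨mem_product.2 ⟨hb, hZ b hb⟩, left_distrib a b c⟩)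
    (fun _ _ _ _ h => congrArg Prod.fst h)

theorem card_pow_three_le_sum_lineCount {A Z : Finset Q} (hA : ∀ a ∈ A, a ≠ 0)
    (hZ : ∀ a ∈ A, ∀ b ∈ A, ∀ c ∈ A, a * (b + c) ∈ Z) :
    #A ^ 3 ≤
      ∑ l ∈ (A ×ˢ A).image (fun ac => (ac.1, ac.1 * ac.2)), lineCount (A ×ˢ Z) l := by
  rw [sum_image (by simpa using injOn_fst_mul (A := (A : Set Q)) hA)]
  calc #A ^ 3 = ∑ _ac ∈ A ×ˢ A, #A := by simp [card_product]; ring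
    _ ≤ _ := sum_le_sum fun ac hac =>
      have ⟨ha, hc⟩ := mem_product.1 hac
      card_le_lineCount fun b hb => hZ ac.1 ha b hb ac.2 hc

variable [Fintype Q]

theorem card_filter_liesOn (p : Q × Q) :
    #{l : Q × Q | LiesOn p l} = Fintype.card Q := by
  have : ({l | LiesOn p l} : Finset (Q × Q)) = univ.image fun m => (m, p.2 - m * p.1) := by
    ext ⟨m, k⟩
    simp only [mem_filter, mem_univ, true_and, mem_image, Prod.mk.injEq, exists_eq_left]
    dsimp only [LiesOn]
    exact ⟨fun h => by rw [h]; abel, fun h => by rw [← h]; abel⟩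
  rw [this, card_image_of_injective _ fun m m' h => congrArg Prod.fst h, card_univ]

theorem card_filter_liesOn_liesOn_le_one {p p' : Q × Q} (hp : p ≠ p') :
    #{l : Q × Q | LiesOn p l ∧ LiesOn p' l} ≤ 1 := by
  refine card_le_one.mpr fun l hl l' hl' => ?_
  simp only [mem_filter, mem_univ, true_and] at hl hl'
  unfold LiesOn at hl hl'
  have hx : p.1 ≠ p'.1 := fun h => hp (Prod.ext h (by rw [hl.1, hl.2, h]))
  have hm : l.1 = l'.1 := eq_of_mul_sub_mul_eq hx <| calc
    l.1 * p.1 - l.1 * p'.1 = p.2 - p'.2 := by rw [hl.1, hl.2]; abel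
    _ = l'.1 * p.1 - l'.1 * p'.1 := by rw [hl'.1, hl'.2]; abel
  exact Prod.ext hm (add_left_cancel (hl.1.symm.trans (hm ▸ hl'.1)))

theorem sum_lineCount (P : Finset (Q × Q)) :
    ∑ l, lineCount P l = #P * Fintype.card Q := by
  calc ∑ l, lineCount P l = ∑ p ∈ P, #{l : Q × Q | LiesOn p l} :=
        (sum_card_bipartiteAbove_eq_sum_card_bipartiteBelow _).symm
    _ = #P * Fintype.card Q := by simp only [card_filter_liesOn, sum_const, smul_eq_mul]

theorem sum_lineCount_sq_le (P : Finset (Q × Q)) :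
    ∑ l, lineCount P l ^ 2 ≤ #P * Fintype.card Q + #P ^ 2 := by
  have hsq (l : Q × Q) :
      lineCount P l ^ 2 = #{pp ∈ P ×ˢ P | LiesOn pp.1 l ∧ LiesOn pp.2 l} := by
    rw [sq, lineCount, ← card_product, ← filter_product]
  have hpair (pp : (Q × Q) × (Q × Q)) : #{l : Q × Q | LiesOn pp.1 l ∧ LiesOn pp.2 l} ≤
      (if pp.1 = pp.2 then Fintype.card Q else 0) + 1 := by
    split_ifs with h
    · calc _ ≤ #{l : Q × Q | LiesOn pp.1 l} :=
            card_le_card (monotone_filter_right _ fun _ _ => And.left)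
        _ ≤ _ := (card_filter_liesOn pp.1).trans_le (Nat.le_succ _)
    · exact card_filter_liesOn_liesOn_le_one h
  calc ∑ l, lineCount P l ^ 2
      = ∑ pp ∈ P ×ˢ P, #{l : Q × Q | LiesOn pp.1 l ∧ LiesOn pp.2 l} := by
        simp_rw [hsq]
        exact (sum_card_bipartiteAbove_eq_sum_card_bipartiteBelow _).symm
    _ ≤ ∑ pp ∈ P ×ˢ P, ((if pp.1 = pp.2 then Fintype.card Q else 0) + 1) :=
        sum_le_sum fun pp _ => hpair pp
    _ = #P * Fintype.card Q + #P ^ 2 := by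
        simp [sum_add_distrib, sum_product, sq]

theorem sum_sq_lineCount_sub_le (P : Finset (Q × Q)) :
    ∑ l, ((lineCount P l : ℝ) - #P / Fintype.card Q) ^ 2 ≤ Fintype.card Q * #P := by
  have h1 : ∑ l, (lineCount P l : ℝ) = #P * Fintype.card Q := by
    exact_mod_cast sum_lineCount P
  have h2 : ∑ l, (lineCount P l : ℝ) ^ 2 ≤ #P * Fintype.card Q + #P ^ 2 := by
    exact_mod_cast sum_lineCount_sq_le P
  set q : ℝ := (Fintype.card Q : ℝ)
  have hq : q ≠ 0 := by simp [q]
  have hcard : (#(univ : Finset (Q × Q)) : ℝ) = q ^ 2 := by simp [q, sq]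
  calc ∑ l, ((lineCount P l : ℝ) - #P / q) ^ 2
      = ∑ l, (lineCount P l : ℝ) ^ 2 - 2 * (#P / q) * ∑ l, (lineCount P l : ℝ)
          + q ^ 2 * (#P / q) ^ 2 := by
        simp only [sub_sq, sum_add_distrib, sum_sub_distrib, ← sum_mul, ← mul_sum, sum_const,
          nsmul_eq_mul, hcard]
        ring
    _ = ∑ l, (lineCount P l : ℝ) ^ 2 - #P ^ 2 := by
        rw [h1]
        field_simp
        ring
    _ ≤ q * #P := by linarith

theorem sum_lineCount_le (P L : Finset (Q × Q)) :
    ∑ l ∈ L, (lineCount P l : ℝ) ≤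
      #P * #L / Fintype.card Q + √(Fintype.card Q * #P * #L) := by
  set q : ℝ := (Fintype.card Q : ℝ)
  have hdev : ∑ l ∈ L, ((lineCount P l : ℝ) - #P / q) ≤ √(q * #P * #L) := by
    refine Real.le_sqrt_of_sq_le ?_
    calc (∑ l ∈ L, ((lineCount P l : ℝ) - #P / q)) ^ 2
        ≤ #L * ∑ l ∈ L, ((lineCount P l : ℝ) - #P / q) ^ 2 := sq_sum_le_card_mul_sum_sq
      _ ≤ #L * (q * #P) := by
        gcongr
        exact (sum_le_univ_sum_of_nonneg fun _ => sq_nonneg _).trans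
          (sum_sq_lineCount_sub_le P)
      _ = q * #P * #L := by ring
  rw [sum_sub_distrib, sum_const, nsmul_eq_mul] at hdev
  linarith [show (#L : ℝ) * (#P / q) = #P * #L / q by ring]

end Quasifield

theorem rpow_three_halves_le_of_cube_le {n q z : ℝ} (hn : 0 ≤ n) (hq : 0 < q) (hz : 0 ≤ z)
    (h : n ^ 3 ≤ n * z * n ^ 2 / q + √(q * (n * z) * n ^ 2)) :
    q * n ^ ((3 : ℝ) / 2) ≤ n ^ ((3 : ℝ) / 2) * z + q ^ ((3 : ℝ) / 2) * √z := by
  have h32 (x : ℝ) (hx : 0 ≤ x) : x ^ ((3 : ℝ) / 2) = √x ^ 3 := by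
    rw [Real.sqrt_eq_rpow, ← Real.rpow_natCast, ← Real.rpow_mul hx]
    norm_num
  rw [h32 n hn, h32 q hq.le]
  obtain ⟨s, hs, rfl⟩ : ∃ s, 0 ≤ s ∧ n = s ^ 2 :=
    ⟨√n, Real.sqrt_nonneg n, (Real.sq_sqrt hn).symm⟩
  obtain ⟨t, ht, rfl⟩ : ∃ t, 0 < t ∧ q = t ^ 2 :=
    ⟨√q, Real.sqrt_pos.2 hq, (Real.sq_sqrt hq.le).symm⟩
  obtain ⟨w, hw, rfl⟩ : ∃ w, 0 ≤ w ∧ z = w ^ 2 :=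
    ⟨√z, Real.sqrt_nonneg z, (Real.sq_sqrt hz).symm⟩
  rw [show t ^ 2 * (s ^ 2 * w ^ 2) * (s ^ 2) ^ 2 = (t * s ^ 3 * w) ^ 2 by ring,
    Real.sqrt_sq (by positivity)] at h
  simp only [Real.sqrt_sq hs, Real.sqrt_sq ht.le, Real.sqrt_sq hw]
  rcases hs.eq_or_lt with rfl | hs
  · norm_num
    positivity
  refine le_of_mul_le_mul_left ?_ (pow_pos hs 3)
  calc s ^ 3 * (t ^ 2 * s ^ 3) = t ^ 2 * (s ^ 2) ^ 3 := by ring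
    _ ≤ t ^ 2 * (s ^ 2 * w ^ 2 * (s ^ 2) ^ 2 / t ^ 2 + t * s ^ 3 * w) := by gcongr
    _ = s ^ 3 * (s ^ 3 * w ^ 2 + t ^ 3 * w) := by field_simp

open Quasifield in
/-- Corollary 1.6 (key inequality): for `A ⊆ Q \ {0}` and
`z = |A·(A+A)|`, one has `q·|A|^{3/2} ≤ |A|^{3/2}·z + q^{3/2}·√z`. -/
theorem stmt_3 {Q : Type*} [Quasifield Q] [Fintype Q]
    (A : Set Q) (hA0 : ∀ a ∈ A, a ≠ 0) (z : ℕ)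
    (hz : z = Set.ncard {x : Q | ∃ a ∈ A, ∃ b ∈ A, ∃ c ∈ A, x = a * (b + c)}) :
    (Fintype.card Q : ℝ) * (A.ncard : ℝ) ^ ((3 : ℝ) / 2) ≤
      (A.ncard : ℝ) ^ ((3 : ℝ) / 2) * z +
        (Fintype.card Q : ℝ) ^ ((3 : ℝ) / 2) * Real.sqrt z := by
  classical
  set S := {x : Q | ∃ a ∈ A, ∃ b ∈ A, ∃ c ∈ A, x = a * (b + c)}
  have hA : ∀ a ∈ A.toFinset, a ≠ 0 := by simpa using hA0
  have hS : ∀ a ∈ A.toFinset, ∀ b ∈ A.toFinset, ∀ c ∈ A.toFinset,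
      a * (b + c) ∈ S.toFinset := by
    simp only [Set.mem_toFinset]
    exact fun a ha b hb c hc => ⟨a, ha, b, hb, c, hc, rfl⟩
  set L := (A.toFinset ×ˢ A.toFinset).image fun ac => (ac.1, ac.1 * ac.2)
  set P := A.toFinset ×ˢ S.toFinset
  have hlower : (#A.toFinset : ℝ) ^ 3 ≤ ∑ l ∈ L, (lineCount P l : ℝ) := by
    exact_mod_cast card_pow_three_le_sum_lineCount hA hS
  have hupper := sum_lineCount_le P L
  rw [card_image_of_injOn (by simpa using injOn_fst_mul hA0), card_product, card_product]
    at hupper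
  rw [hz, Set.ncard_eq_toFinset_card', Set.ncard_eq_toFinset_card']
  refine rpow_three_halves_le_of_cube_le (by positivity) (by simp [Fintype.card_pos])
    (by positivity) ?_
  push_cast at hupper ⊢
  simpa only [sq] using hlower.trans hupper
end

section
/- Let d ≥ 1 be an integer, let Q be a finite (left) quasifield with q elements, and let A ⊆ Q satisfy |A| > q^{(d+2)/(2d+2)}. Then every element γ ∈ Q can be written as γ = a + a' + a₁·b₁ + a₂·b₂ + ⋯ + a_d·b_d with a, a', a₁, …, a_d, b₁, …, b_d ∈ A; that is, Q = A + A + A·A + ⋯ + A·A (with d summands A·A). -/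
/-!
Count representations of `γ` with additive characters: `q` times their number is
`∑ ψ, ψ (-γ) * S ψ ^ 2 * T ψ ^ d`, where `S ψ = ∑ a ∈ A, ψ a` and
`T ψ = ∑ a ∈ A, ∑ b ∈ A, ψ (a * b)`. The trivial character contributes `|A| ^ (2d + 2)`.
For `ψ ≠ 0` the affine-equation axiom makes `b ↦ a * b - a' * b` bijective when `a ≠ a'`,
so the functions `b ↦ ψ (a * b)` are orthogonal and Cauchy–Schwarz gives `‖T ψ‖ ≤ |A| √q`.
With Parseval, `∑ ψ, ‖S ψ‖ ^ 2 = q |A|`, the other characters contribute at most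
`(|A| √q) ^ d * q |A|`, which is smaller than `|A| ^ (2d + 2)` as soon as
`q ^ (d + 2) < |A| ^ (2d + 2)`.
-/

open Finset ComplexConjugate

theorem Finset.sum_ne_zero_of_sum_erase_norm_lt {ι E : Type*} [SeminormedAddCommGroup E]
    [DecidableEq ι] {s : Finset ι} {f : ι → E} {i : ι} (hi : i ∈ s)
    (h : ∑ j ∈ s.erase i, ‖f j‖ < ‖f i‖) : ∑ j ∈ s, f j ≠ 0 := by
  rw [← add_sum_erase s f hi]
  intro hzero
  have : ‖f i‖ ≤ ∑ j ∈ s.erase i, ‖f j‖ := by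
    rw [eq_neg_of_add_eq_zero_left hzero, norm_neg]
    exact norm_sum_le _ _
  exact this.not_gt h

theorem Real.pow_lt_pow_of_rpow_div_lt {x y : ℝ} (hx : 0 ≤ x) {m k : ℕ} (hk : 0 < k)
    (h : x ^ ((m : ℝ) / k) < y) : x ^ m < y ^ k := by
  have hy : 0 ≤ y := (Real.rpow_nonneg hx _).trans h.le
  rwa [div_eq_mul_inv, Real.rpow_mul hx, Real.rpow_natCast,
    Real.rpow_inv_lt_iff_of_pos (by positivity) hy (by exact_mod_cast hk), Real.rpow_natCast] at h

theorem Real.sqrt_pow_mul_lt_of_pow_lt {n q : ℝ} (hq : 0 ≤ q) (d : ℕ)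
    (h : q ^ (d + 2) < n ^ (2 * d + 2)) :
    √(n * n * q) ^ d * (q * n) < n ^ (2 * d + 2) := by
  have hpos : 0 < n ^ (2 * d + 2) := (pow_nonneg hq _).trans_lt h
  refine lt_of_pow_lt_pow_left₀ 2 hpos.le ?_
  calc (√(n * n * q) ^ d * (q * n)) ^ 2 = n ^ (2 * d + 2) * q ^ (d + 2) := by
        rw [mul_pow, ← pow_mul, mul_comm d, pow_mul,
          Real.sq_sqrt (mul_nonneg (mul_self_nonneg n) hq)]
        ring
    _ < n ^ (2 * d + 2) * n ^ (2 * d + 2) := by gcongr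
    _ = (n ^ (2 * d + 2)) ^ 2 := by ring

theorem Complex.sum_norm_sq_sum_eq_of_orthogonal {α X : Type*} [Fintype X] [DecidableEq α]
    (A : Finset α) (e : α → X → ℂ) (c : ℝ)
    (he : ∀ a a', ∑ x, e a x * conj (e a' x) = if a = a' then (c : ℂ) else 0) :
    ∑ x, ‖∑ a ∈ A, e a x‖ ^ 2 = #A * c := by
  apply Complex.ofReal_injective
  push_cast
  calc ∑ x, (‖∑ a ∈ A, e a x‖ : ℂ) ^ 2
      = ∑ x, ∑ a ∈ A, ∑ a' ∈ A, e a x * conj (e a' x) := by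
        simp_rw [← Complex.mul_conj', map_sum, sum_mul_sum]
    _ = ∑ a ∈ A, ∑ a' ∈ A, ∑ x, e a x * conj (e a' x) := by
        rw [sum_comm]
        exact sum_congr rfl fun _ _ => sum_comm
    _ = #A * c := by
        simp_rw [he]
        rw [sum_congr rfl fun a ha => by rw [sum_ite_eq, if_pos ha]]
        simp

namespace AddChar

variable {G : Type*} [AddCommGroup G]

theorem map_sum_eq_prod {ι M : Type*} [CommMonoid M] (ψ : AddChar G M) (s : Finset ι)
    (f : ι → G) : ψ (∑ i ∈ s, f i) = ∏ i ∈ s, ψ (f i) := by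
  classical
  induction s using Finset.induction_on with
  | empty => simp
  | insert i s hi ih => rw [sum_insert hi, prod_insert hi, map_add_eq_mul, ih]

theorem sum_apply_add_add_sum {R κ : Type*} [CommSemiring R] (ψ : AddChar G R)
    (A B : Finset G) (C : Finset κ) (μ : κ → G) (d : ℕ) :
    ∑ t ∈ A ×ˢ B ×ˢ Fintype.piFinset (fun _ : Fin d => C),
        ψ (t.1 + t.2.1 + ∑ i, μ (t.2.2 i)) =
      (∑ a ∈ A, ψ a) * (∑ b ∈ B, ψ b) * (∑ c ∈ C, ψ (μ c)) ^ d := by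
  rw [sum_pow', sum_mul_sum, sum_mul]
  simp_rw [sum_product, sum_mul, mul_sum, map_add_eq_mul, map_sum_eq_prod]

variable [Fintype G]

theorem sum_norm_sq_sum_apply (A : Finset G) :
    ∑ ψ : AddChar G ℂ, ‖∑ a ∈ A, ψ a‖ ^ 2 = Fintype.card G * #A := by
  classical
  rw [mul_comm]
  refine Complex.sum_norm_sq_sum_eq_of_orthogonal A (fun a (ψ : AddChar G ℂ) => ψ a)
    (Fintype.card G) fun a a' => ?_
  simp only [← map_neg_eq_conj, ← map_add_eq_mul, ← sub_eq_add_neg]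
  simp [sum_apply_eq_ite, sub_eq_zero]

theorem exists_mem_eq_of_sum_ne_zero {ι : Type*} (D : Finset ι) (φ : ι → G) (γ : G)
    (h : ∑ ψ : AddChar G ℂ, ψ (-γ) * ∑ t ∈ D, ψ (φ t) ≠ 0) :
    ∃ t ∈ D, φ t = γ := by
  by_contra! hne
  refine h ?_
  simp_rw [mul_sum, ← map_add_eq_mul]
  rw [sum_comm]
  refine sum_eq_zero fun t ht => sum_apply_eq_zero_iff_ne_zero.2 ?_
  rw [neg_add_eq_sub, sub_ne_zero]
  exact hne t ht

end AddChar

namespace Quasifield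

variable {Q : Type*} [Quasifield Q]

theorem bijective_mul_sub_mul {a a' : Q} (h : a ≠ a') :
    Function.Bijective fun b : Q => a * b - a' * b := by
  refine (Function.bijective_iff_existsUnique _).2 fun c => ?_
  simpa only [sub_eq_iff_eq_add, add_comm c] using existsUnique_affine a a' c h

variable [Fintype Q] {ψ : AddChar Q ℂ}

theorem sum_addChar_mul_mul_conj [DecidableEq Q] (hψ : ψ ≠ 0) (a a' : Q) :
    ∑ b, ψ (a * b) * conj (ψ (a' * b)) = if a = a' then (Fintype.card Q : ℂ) else 0 := by
  simp_rw [← AddChar.map_neg_eq_conj, ← AddChar.map_add_eq_mul, ← sub_eq_add_neg]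
  split_ifs with h
  · simp [h]
  · rw [Fintype.sum_bijective _ (bijective_mul_sub_mul h) _ ψ fun _ => rfl]
    exact AddChar.sum_eq_zero_iff_ne_zero.2 hψ

theorem norm_sum_addChar_mul_le (hψ : ψ ≠ 0) (A B : Finset Q) :
    ‖∑ p ∈ A ×ˢ B, ψ (p.1 * p.2)‖ ≤ √(#A * #B * Fintype.card Q) := by
  classical
  have hcol : ∑ b, ‖∑ a ∈ A, ψ (a * b)‖ ^ 2 = #A * Fintype.card Q := by
    refine Complex.sum_norm_sq_sum_eq_of_orthogonal A (fun a b => ψ (a * b)) _ fun a a' => ?_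
    rw [sum_addChar_mul_mul_conj hψ]
    push_cast
    rfl
  rw [Real.le_sqrt (norm_nonneg _) (by positivity), sum_product_right]
  calc ‖∑ b ∈ B, ∑ a ∈ A, ψ (a * b)‖ ^ 2
      ≤ (∑ b ∈ B, ‖∑ a ∈ A, ψ (a * b)‖) ^ 2 := by gcongr; exact norm_sum_le _ _
    _ ≤ #B * ∑ b ∈ B, ‖∑ a ∈ A, ψ (a * b)‖ ^ 2 := sq_sum_le_card_mul_sum_sq
    _ ≤ #B * ∑ b, ‖∑ a ∈ A, ψ (a * b)‖ ^ 2 := by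
        gcongr
        exact subset_univ B
    _ = #A * #B * Fintype.card Q := by rw [hcol]; ring

theorem sum_erase_zero_norm_le (A : Finset Q) (d : ℕ) (γ : Q) :
    ∑ ψ ∈ univ.erase (0 : AddChar Q ℂ),
        ‖ψ (-γ) * ((∑ a ∈ A, ψ a) * (∑ a ∈ A, ψ a) * (∑ p ∈ A ×ˢ A, ψ (p.1 * p.2)) ^ d)‖ ≤
      √(#A * #A * Fintype.card Q) ^ d * (Fintype.card Q * #A) := by
  calc _ = ∑ ψ ∈ univ.erase (0 : AddChar Q ℂ),
          ‖∑ p ∈ A ×ˢ A, ψ (p.1 * p.2)‖ ^ d * ‖∑ a ∈ A, ψ a‖ ^ 2 := by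
        simp only [norm_mul, norm_pow, AddChar.norm_apply]
        exact sum_congr rfl fun _ _ => by ring
    _ ≤ ∑ ψ ∈ univ.erase (0 : AddChar Q ℂ),
          √(#A * #A * Fintype.card Q) ^ d * ‖∑ a ∈ A, ψ a‖ ^ 2 := by
        gcongr with ψ hψ
        exact norm_sum_addChar_mul_le (ne_of_mem_erase hψ) A A
    _ ≤ √(#A * #A * Fintype.card Q) ^ d * ∑ ψ : AddChar Q ℂ, ‖∑ a ∈ A, ψ a‖ ^ 2 := by
        rw [← mul_sum]
        gcongr
        exact subset_univ _
    _ = √(#A * #A * Fintype.card Q) ^ d * (Fintype.card Q * #A) := by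
        rw [AddChar.sum_norm_sq_sum_apply]

end Quasifield

theorem stmt_7_general {Q : Type*} [Quasifield Q] [Fintype Q]
    (d : ℕ) (A : Finset Q)
    (hA : (Fintype.card Q : ℝ) ^ (((d : ℝ) + 2) / (2 * (d : ℝ) + 2)) < (A.card : ℝ)) :
    ∀ γ : Q, ∃ a ∈ A, ∃ a' ∈ A, ∃ f g : Fin d → Q,
      (∀ i, f i ∈ A) ∧ (∀ i, g i ∈ A) ∧ γ = a + a' + ∑ i, f i * g i := by
  classical
  intro γ
  set n : ℝ := (#A : ℝ)
  set q : ℝ := (Fintype.card Q : ℝ)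
  have hcard : q ^ (d + 2) < n ^ (2 * d + 2) :=
    Real.pow_lt_pow_of_rpow_div_lt (by positivity) (by omega) (by push_cast; exact hA)
  let S : AddChar Q ℂ → ℂ := fun ψ => ∑ a ∈ A, ψ a
  let T : AddChar Q ℂ → ℂ := fun ψ => ∑ p ∈ A ×ˢ A, ψ (p.1 * p.2)
  suffices hne : ∑ ψ : AddChar Q ℂ, ψ (-γ) * (S ψ * S ψ * T ψ ^ d) ≠ 0 by
    obtain ⟨t, ht, rfl⟩ := AddChar.exists_mem_eq_of_sum_ne_zero
      (A ×ˢ A ×ˢ Fintype.piFinset fun _ : Fin d => A ×ˢ A)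
      (fun t => t.1 + t.2.1 + ∑ i, (t.2.2 i).1 * (t.2.2 i).2) γ
      (by
        convert hne using 3 with ψ
        exact ψ.sum_apply_add_add_sum A A (A ×ˢ A) (fun p => p.1 * p.2) d)
    simp only [mem_product, Fintype.mem_piFinset] at ht
    exact ⟨t.1, ht.1, t.2.1, ht.2.1, fun i => (t.2.2 i).1, fun i => (t.2.2 i).2,
      fun i => (ht.2.2 i).1, fun i => (ht.2.2 i).2, rfl⟩
  refine sum_ne_zero_of_sum_erase_norm_lt (mem_univ 0) ?_
  calc _ ≤ √(n * n * q) ^ d * (q * n) := Quasifield.sum_erase_zero_norm_le A d γ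
    _ < n ^ (2 * d + 2) := Real.sqrt_pow_mul_lt_of_pow_lt (by positivity) d hcard
    _ = ‖(0 : AddChar Q ℂ) (-γ) * (S 0 * S 0 * T 0 ^ d)‖ := by
        simp only [AddChar.zero_apply, sum_const, nsmul_eq_mul, mul_one, card_product,
          Nat.cast_mul, one_mul, Complex.norm_mul, RCLike.norm_natCast, norm_pow, n, S, T]
        ring

/-- Theorem 1.11: if `d ≥ 1` and `A ⊆ Q` with `|A| > q^{(d+2)/(2d+2)}`, then
`Q = A + A + A·A + ⋯ + A·A` (with `d` summands `A·A`). -/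
theorem stmt_7 {Q : Type*} [Quasifield Q] [Fintype Q] [DecidableEq Q]
    (d : ℕ) (hd : 1 ≤ d) (A : Finset Q)
    (hA : (Fintype.card Q : ℝ) ^ (((d : ℝ) + 2) / (2 * (d : ℝ) + 2)) < (A.card : ℝ)) :
    ∀ γ : Q, ∃ a ∈ A, ∃ a' ∈ A, ∃ f g : Fin d → Q,
      (∀ i, f i ∈ A) ∧ (∀ i, g i ∈ A) ∧ γ = a + a' + ∑ i, f i * g i :=
  stmt_7_general d A hA
end
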